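/- Let χ̃ : R^d → C satisfy |χ̃(x)| ≤ C_n ‖x‖^{−n} for every n ∈ ℕ and suitable constants C_n (rapid decay), with d ≥ 2. Then the kernel K(p,q) = ((‖p‖^{1/2} − ‖q‖^{1/2})/‖q‖^{1/2}) · χ̃(p − q) · 1_{‖q‖ ≤ 1}(q) is square integrable on R^d × R^d, i.e. the associated integral operator is Hilbert–Schmidt on L²(R^d). -/

import Mathlib

open MeasureTheory Metric Set ENNReal

section Aux
lemma aux_integrable_inv_norm {d : ℕ} (hd : 2 ≤ d) :
    Integrable (fun q : EuclideanSpace ℝ (Fin d) =>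
      if ‖q‖ ≤ 1 then ‖q‖⁻¹ else 0) := by
  have hmeas : Measurable (fun q : EuclideanSpace ℝ (Fin d) =>
      if ‖q‖ ≤ 1 then ‖q‖⁻¹ else 0) :=
    Measurable.ite (measurableSet_le measurable_norm measurable_const)
      measurable_norm.inv measurable_const
  refine ⟨hmeas.aestronglyMeasurable, ?_⟩
  rw [hasFiniteIntegral_iff_norm]
  have hrw : ∀ q : EuclideanSpace ℝ (Fin d),
      ENNReal.ofReal ‖if ‖q‖ ≤ 1 then ‖q‖⁻¹ else 0‖ =
        (closedBall (0 : EuclideanSpace ℝ (Fin d)) 1).indicator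
          (fun q => ENNReal.ofReal ‖q‖⁻¹) q := by
    intro q
    by_cases h : ‖q‖ ≤ 1
    · simp [h, indicator, mem_closedBall, dist_zero_right,
        Real.norm_of_nonneg (inv_nonneg.2 (norm_nonneg q))]
    · simp [h, indicator, mem_closedBall, dist_zero_right]
  simp only [hrw]
  rw [lintegral_indicator measurableSet_closedBall _]
  -- layer cake
  set μ' := (volume : Measure (EuclideanSpace ℝ (Fin d))).restrict (closedBall 0 1) with hμ'
  have hnn : (0 : EuclideanSpace ℝ (Fin d) → ℝ) ≤ᵐ[μ'] fun q => ‖q‖⁻¹ :=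
    Filter.Eventually.of_forall fun q => inv_nonneg.2 (norm_nonneg q)
  rw [show (∫⁻ q in closedBall (0 : EuclideanSpace ℝ (Fin d)) 1, ENNReal.ofReal ‖q‖⁻¹) =
      ∫⁻ q, ENNReal.ofReal ‖q‖⁻¹ ∂μ' from rfl,
    lintegral_eq_lintegral_meas_le μ' hnn measurable_norm.inv.aemeasurable]
  set V := (volume : Measure (EuclideanSpace ℝ (Fin d))) (closedBall 0 1) with hV
  set B := (volume : Measure (EuclideanSpace ℝ (Fin d))) (ball 0 1) with hB
  have hVlt : V < ∞ := measure_closedBall_lt_top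
  have hBlt : B < ∞ := measure_ball_lt_top
  have hD : Module.finrank ℝ (EuclideanSpace ℝ (Fin d)) = d := finrank_euclideanSpace_fin
  have hbound1 : ∀ t : ℝ, μ' {a | t ≤ ‖a‖⁻¹} ≤ V := fun t => by
    calc μ' {a | t ≤ ‖a‖⁻¹} ≤ μ' univ := measure_mono (subset_univ _)
    _ = V := by rw [hμ', Measure.restrict_apply_univ]
  have hbound2 : ∀ t : ℝ, 0 < t → μ' {a | t ≤ ‖a‖⁻¹} ≤
      ENNReal.ofReal (t⁻¹ ^ d) * B := by
    intro t ht
    have hsub : {a : EuclideanSpace ℝ (Fin d) | t ≤ ‖a‖⁻¹} ⊆ closedBall 0 t⁻¹ := by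
      intro a ha
      simp only [mem_setOf_eq] at ha
      rcases eq_or_lt_of_le (norm_nonneg a) with h0 | h0
      · simp [mem_closedBall, dist_zero_right, ← h0, inv_nonneg.2 ht.le]
      · have : ‖a‖ ≤ t⁻¹ := by
          rw [le_inv_comm₀ h0 ht] at *
          · exact ha
        simpa [mem_closedBall, dist_zero_right]
    calc μ' {a | t ≤ ‖a‖⁻¹} ≤ volume {a : EuclideanSpace ℝ (Fin d) | t ≤ ‖a‖⁻¹} :=
        Measure.restrict_le_self _
    _ ≤ volume (closedBall (0 : EuclideanSpace ℝ (Fin d)) t⁻¹) := measure_mono hsub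
    _ = ENNReal.ofReal (t⁻¹ ^ d) * B := by
        rw [Measure.addHaar_closedBall _ _ (inv_nonneg.2 ht.le), hD]
  calc (∫⁻ t in Ioi (0:ℝ), μ' {a | t ≤ ‖a‖⁻¹})
      ≤ ∫⁻ t in Ioc (0:ℝ) 1 ∪ Ioi 1, μ' {a | t ≤ ‖a‖⁻¹} :=
        lintegral_mono_set Ioi_subset_Ioc_union_Ioi
    _ ≤ (∫⁻ t in Ioc (0:ℝ) 1, μ' {a | t ≤ ‖a‖⁻¹}) +
        ∫⁻ t in Ioi (1:ℝ), μ' {a | t ≤ ‖a‖⁻¹} := lintegral_union_le _ _ _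
    _ < ∞ := by
        refine ENNReal.add_lt_top.2 ⟨?_, ?_⟩
        · calc (∫⁻ t in Ioc (0:ℝ) 1, μ' {a | t ≤ ‖a‖⁻¹})
              ≤ ∫⁻ _ in Ioc (0:ℝ) 1, V := lintegral_mono fun t => hbound1 t
          _ = V * volume (Ioc (0:ℝ) 1) := by rw [setLIntegral_const]
          _ < ∞ := by
              refine ENNReal.mul_lt_top hVlt ?_
              simp [Real.volume_Ioc]
        · have h1 : (∫⁻ t in Ioi (1:ℝ), μ' {a | t ≤ ‖a‖⁻¹})
              ≤ ∫⁻ t in Ioi (1:ℝ), ENNReal.ofReal (t ^ (-(d:ℝ))) * B := by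
            refine setLIntegral_mono' measurableSet_Ioi fun t ht => ?_
            have ht1 : (1:ℝ) < t := ht
            have ht0 : (0:ℝ) < t := lt_trans one_pos ht1
            refine le_trans (hbound2 t ht0) ?_
            have : t⁻¹ ^ d = t ^ (-(d:ℝ)) := by
              rw [Real.rpow_neg ht0.le, Real.rpow_natCast, inv_pow]
            rw [this]
          refine lt_of_le_of_lt h1 ?_
          rw [lintegral_mul_const' _ _ hBlt.ne]
          refine ENNReal.mul_lt_top ?_ hBlt
          have hint : IntegrableOn (fun t : ℝ => t ^ (-(d:ℝ))) (Ioi 1) := by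
            refine integrableOn_Ioi_rpow_of_lt ?_ one_pos
            have : (2:ℝ) ≤ (d:ℝ) := by exact_mod_cast hd
            linarith
          exact hint.setLIntegral_lt_top

lemma aux_sqrt_ineq {a b N : ℝ} (ha : 0 < a) (hb : 0 < b) (hN : |a - b| ≤ N) :
    ((Real.sqrt a - Real.sqrt b) / Real.sqrt b) ^ 2 ≤ N ^ 2 / (a * b) := by
  have hsa : Real.sqrt a ^ 2 = a := Real.sq_sqrt ha.le
  have hsb : Real.sqrt b ^ 2 = b := Real.sq_sqrt hb.le
  have hsa0 : 0 < Real.sqrt a := Real.sqrt_pos.2 ha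
  have hsb0 : 0 < Real.sqrt b := Real.sqrt_pos.2 hb
  have h1 : (Real.sqrt a - Real.sqrt b) ^ 2 * a ≤ (a - b) ^ 2 := by
    have e : ((Real.sqrt a - Real.sqrt b) * (Real.sqrt a + Real.sqrt b)) ^ 2 = (a - b) ^ 2 := by
      rw [mul_comm]
      nlinarith [hsa, hsb]
    nlinarith [sq_nonneg (Real.sqrt a - Real.sqrt b), sq_nonneg (Real.sqrt a + Real.sqrt b),
      mul_pos hsa0 hsb0]
  have h2 : (a - b) ^ 2 ≤ N ^ 2 := by
    rw [← sq_abs (a - b)]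
    exact pow_le_pow_left₀ (abs_nonneg _) hN 2
  rw [div_pow, hsb, div_le_div_iff₀ hb (by positivity)]
  calc (Real.sqrt a - Real.sqrt b) ^ 2 * (a * b)
      = ((Real.sqrt a - Real.sqrt b) ^ 2 * a) * b := by ring
    _ ≤ (a - b) ^ 2 * b := by gcongr
    _ ≤ N ^ 2 * b := by gcongr

lemma aux_g_bounds {d : ℕ} (χ : EuclideanSpace ℝ (Fin d) → ℂ)
    (hdecay : ∀ n : ℕ, ∃ C : ℝ, ∀ x : EuclideanSpace ℝ (Fin d), x ≠ 0 →
      ‖χ x‖ ≤ C * ‖x‖ ^ (-(n : ℝ))) :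
    ∃ M : ℝ, 0 ≤ M ∧ (∀ x : EuclideanSpace ℝ (Fin d), ‖x‖ ^ 2 * ‖χ x‖ ^ 2 ≤ M) ∧
      (∀ x : EuclideanSpace ℝ (Fin d),
        ‖x‖ ^ 2 * ‖χ x‖ ^ 2 * (1 + ‖x‖) ^ (d + 1) ≤ M * 2 ^ (d + 1)) := by
  obtain ⟨C0, h0⟩ := hdecay 0
  obtain ⟨Cn, hn⟩ := hdecay (d + 2)
  set D0 := max C0 0 with hD0
  set Dn := max Cn 0 with hDn
  have hD0nn : 0 ≤ D0 := le_max_right _ _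
  have hDnnn : 0 ≤ Dn := le_max_right _ _
  -- basic bounds on χ
  have hbs : ∀ x : EuclideanSpace ℝ (Fin d), x ≠ 0 → ‖x‖ ≤ 1 → ‖χ x‖ ≤ D0 := by
    intro x hx _
    refine (h0 x hx).trans ?_
    simp only [Nat.cast_zero, neg_zero, Real.rpow_zero, mul_one]
    exact le_max_left _ _
  have hbl : ∀ x : EuclideanSpace ℝ (Fin d), 1 < ‖x‖ →
      ‖χ x‖ ≤ Dn * (‖x‖ ^ (d + 2))⁻¹ := by
    intro x hx1
    have hx : x ≠ 0 := by
      intro h; rw [h] at hx1; simp at hx1; linarith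
    have h1 := hn x hx
    have h2 : ‖x‖ ^ (-((d + 2 : ℕ) : ℝ)) = (‖x‖ ^ (d + 2))⁻¹ := by
      rw [Real.rpow_neg (norm_nonneg x), Real.rpow_natCast]
    rw [h2] at h1
    exact h1.trans (by gcongr; exact le_max_left _ _)
  -- the main pointwise bound
  have hmain : ∀ x : EuclideanSpace ℝ (Fin d), x ≠ 0 →
      ‖x‖ ^ 2 * ‖χ x‖ ^ 2 ≤ D0 ^ 2 + Dn ^ 2 := by
    intro x hx
    by_cases hx1 : ‖x‖ ≤ 1
    · have h1 : ‖x‖ ^ 2 ≤ 1 := pow_le_one₀ (norm_nonneg x) hx1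
      have h2 : ‖χ x‖ ^ 2 ≤ D0 ^ 2 := pow_le_pow_left₀ (norm_nonneg _) (hbs x hx hx1) 2
      nlinarith [sq_nonneg ‖χ x‖, sq_nonneg Dn, norm_nonneg x]
    · push_neg at hx1
      have hx0 : (0:ℝ) < ‖x‖ := lt_trans one_pos hx1
      have h2 : ‖χ x‖ ^ 2 ≤ Dn ^ 2 * ((‖x‖ ^ (d + 2))⁻¹) ^ 2 := by
        have := pow_le_pow_left₀ (norm_nonneg _) (hbl x hx1) 2
        rwa [mul_pow] at this
      have h3 : ‖x‖ ^ 2 * ((‖x‖ ^ (d + 2))⁻¹) ^ 2 ≤ 1 := by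
        rw [inv_pow, ← pow_mul]
        have hle : ‖x‖ ^ 2 ≤ ‖x‖ ^ ((d + 2) * 2) := pow_le_pow_right₀ hx1.le (by omega)
        calc ‖x‖ ^ 2 * (‖x‖ ^ ((d + 2) * 2))⁻¹
            ≤ ‖x‖ ^ ((d + 2) * 2) * (‖x‖ ^ ((d + 2) * 2))⁻¹ := by gcongr
          _ = 1 := mul_inv_cancel₀ (by positivity)
      calc ‖x‖ ^ 2 * ‖χ x‖ ^ 2 ≤ ‖x‖ ^ 2 * (Dn ^ 2 * ((‖x‖ ^ (d + 2))⁻¹) ^ 2) := by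
            gcongr
        _ = Dn ^ 2 * (‖x‖ ^ 2 * ((‖x‖ ^ (d + 2))⁻¹) ^ 2) := by ring
        _ ≤ Dn ^ 2 * 1 := by gcongr
        _ ≤ D0 ^ 2 + Dn ^ 2 := by nlinarith [sq_nonneg D0]
  -- strengthened bound with an extra power of ‖x‖
  have hmain2 : ∀ x : EuclideanSpace ℝ (Fin d), x ≠ 0 →
      ‖x‖ ^ 2 * ‖χ x‖ ^ 2 * ‖x‖ ^ (d + 1) ≤ D0 ^ 2 + Dn ^ 2 := by
    intro x hx
    by_cases hx1 : ‖x‖ ≤ 1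
    · have h1 : ‖x‖ ^ (d + 1) ≤ 1 := pow_le_one₀ (norm_nonneg x) hx1
      calc ‖x‖ ^ 2 * ‖χ x‖ ^ 2 * ‖x‖ ^ (d + 1) ≤ ‖x‖ ^ 2 * ‖χ x‖ ^ 2 * 1 := by
            gcongr
        _ = ‖x‖ ^ 2 * ‖χ x‖ ^ 2 := mul_one _
        _ ≤ D0 ^ 2 + Dn ^ 2 := hmain x hx
    · push_neg at hx1
      have hx0 : (0:ℝ) < ‖x‖ := lt_trans one_pos hx1
      have h2 : ‖χ x‖ ^ 2 ≤ Dn ^ 2 * ((‖x‖ ^ (d + 2))⁻¹) ^ 2 := by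
        have := pow_le_pow_left₀ (norm_nonneg _) (hbl x hx1) 2
        rwa [mul_pow] at this
      have h3 : ‖x‖ ^ (d + 3) * (‖x‖ ^ ((d + 2) * 2))⁻¹ ≤ 1 := by
        have hle : ‖x‖ ^ (d + 3) ≤ ‖x‖ ^ ((d + 2) * 2) := pow_le_pow_right₀ hx1.le (by omega)
        calc ‖x‖ ^ (d + 3) * (‖x‖ ^ ((d + 2) * 2))⁻¹
            ≤ ‖x‖ ^ ((d + 2) * 2) * (‖x‖ ^ ((d + 2) * 2))⁻¹ := by gcongr
          _ = 1 := mul_inv_cancel₀ (by positivity)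
      calc ‖x‖ ^ 2 * ‖χ x‖ ^ 2 * ‖x‖ ^ (d + 1)
          ≤ ‖x‖ ^ 2 * (Dn ^ 2 * ((‖x‖ ^ (d + 2))⁻¹) ^ 2) * ‖x‖ ^ (d + 1) := by gcongr
        _ = Dn ^ 2 * (‖x‖ ^ (d + 3) * (‖x‖ ^ ((d + 2) * 2))⁻¹) := by
            rw [inv_pow, ← pow_mul]
            rw [show d + 3 = 2 + (d + 1) by ring, pow_add]
            ring
        _ ≤ Dn ^ 2 * 1 := by gcongr
        _ ≤ D0 ^ 2 + Dn ^ 2 := by nlinarith [sq_nonneg D0]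
  refine ⟨D0 ^ 2 + Dn ^ 2, by positivity, ?_, ?_⟩
  · intro x
    rcases eq_or_ne x 0 with rfl | hx
    · have : ‖(0 : EuclideanSpace ℝ (Fin d))‖ = 0 := norm_zero
      rw [this]
      nlinarith [sq_nonneg ‖χ (0 : EuclideanSpace ℝ (Fin d))‖, sq_nonneg D0, sq_nonneg Dn]
    · exact hmain x hx
  · intro x
    rcases eq_or_ne x 0 with rfl | hx
    · have : ‖(0 : EuclideanSpace ℝ (Fin d))‖ = 0 := norm_zero
      rw [this]
      have h1 : (0:ℝ) ^ 2 = 0 := by norm_num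
      rw [h1, zero_mul, zero_mul]
      positivity
    · by_cases hx1 : ‖x‖ ≤ 1
      · have h3 : (1 + ‖x‖) ^ (d + 1) ≤ 2 ^ (d + 1) :=
          pow_le_pow_left₀ (by positivity) (by linarith) _
        exact mul_le_mul (hmain x hx) h3 (by positivity) (by positivity)
      · push_neg at hx1
        have h3 : (1 + ‖x‖) ^ (d + 1) ≤ 2 ^ (d + 1) * ‖x‖ ^ (d + 1) := by
          rw [← mul_pow]
          exact pow_le_pow_left₀ (by positivity) (by linarith) _
        calc ‖x‖ ^ 2 * ‖χ x‖ ^ 2 * (1 + ‖x‖) ^ (d + 1)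
            ≤ ‖x‖ ^ 2 * ‖χ x‖ ^ 2 * (2 ^ (d + 1) * ‖x‖ ^ (d + 1)) := by gcongr
          _ = (‖x‖ ^ 2 * ‖χ x‖ ^ 2 * ‖x‖ ^ (d + 1)) * 2 ^ (d + 1) := by ring
          _ ≤ (D0 ^ 2 + Dn ^ 2) * 2 ^ (d + 1) := by gcongr ?_ * _; exact hmain2 x hx

lemma aux_integrable_g {d : ℕ} {M : ℝ}
    (χ : EuclideanSpace ℝ (Fin d) → ℂ) (hmeas : Measurable χ)
    (hM : ∀ x : EuclideanSpace ℝ (Fin d),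
      ‖x‖ ^ 2 * ‖χ x‖ ^ 2 * (1 + ‖x‖) ^ (d + 1) ≤ M * 2 ^ (d + 1)) :
    Integrable (fun x : EuclideanSpace ℝ (Fin d) => ‖x‖ ^ 2 * ‖χ x‖ ^ 2) := by
  have hnr : (Module.finrank ℝ (EuclideanSpace ℝ (Fin d)) : ℝ) < ((d + 1 : ℕ) : ℝ) := by
    rw [finrank_euclideanSpace_fin]
    push_cast; linarith
  have base : Integrable (fun x : EuclideanSpace ℝ (Fin d) =>
      (1 + ‖x‖) ^ (-((d + 1 : ℕ) : ℝ))) := integrable_one_add_norm hnr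
  refine (base.const_mul (M * 2 ^ (d + 1))).mono' ?_ ?_
  · exact ((measurable_norm.pow_const 2).mul ((hmeas.norm).pow_const 2)).aestronglyMeasurable
  · refine Filter.Eventually.of_forall fun x => ?_
    have h0 : (0:ℝ) < 1 + ‖x‖ := by positivity
    rw [Real.norm_of_nonneg (by positivity), Real.rpow_neg h0.le, Real.rpow_natCast,
      ← div_eq_mul_inv, le_div_iff₀ (by positivity)]
    exact hM x

lemma aux_integrable_H {d : ℕ} (M : ℝ) (g w : EuclideanSpace ℝ (Fin d) → ℝ)
    (hg : Integrable g) (hw : Integrable w) :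
    Integrable (fun pq : EuclideanSpace ℝ (Fin d) × EuclideanSpace ℝ (Fin d) =>
      (g (pq.1 - pq.2) + M * w pq.1) * w pq.2)
      (volume : Measure (EuclideanSpace ℝ (Fin d) × EuclideanSpace ℝ (Fin d))) := by
  rw [Measure.volume_eq_prod]
  let T : (EuclideanSpace ℝ (Fin d) × EuclideanSpace ℝ (Fin d)) ≃ᵐ
      (EuclideanSpace ℝ (Fin d) × EuclideanSpace ℝ (Fin d)) :=
    { toFun := fun z => (z.1 - z.2, z.2)
      invFun := fun z => (z.1 + z.2, z.2)
      left_inv := fun z => by simp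
      right_inv := fun z => by simp
      measurable_toFun := (measurable_fst.sub measurable_snd).prodMk measurable_snd
      measurable_invFun := (measurable_fst.add measurable_snd).prodMk measurable_snd }
  have hT : MeasurePreserving (⇑T) (Measure.prod volume volume) (Measure.prod volume volume) :=
    measurePreserving_sub_prod volume volume
  have base : Integrable (fun z : EuclideanSpace ℝ (Fin d) × EuclideanSpace ℝ (Fin d) =>
      g z.1 * w z.2) (Measure.prod volume volume) := hg.mul_prod hw
  have h1 : Integrable (fun pq : EuclideanSpace ℝ (Fin d) × EuclideanSpace ℝ (Fin d) =>
      g (pq.1 - pq.2) * w pq.2) (Measure.prod volume volume) :=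
    (hT.integrable_comp_emb T.measurableEmbedding).mpr base
  have h2 : Integrable (fun pq : EuclideanSpace ℝ (Fin d) × EuclideanSpace ℝ (Fin d) =>
      (M * w pq.1) * w pq.2) (Measure.prod volume volume) :=
    (hw.const_mul M).mul_prod hw
  have := h1.add h2
  refine this.congr (Filter.Eventually.of_forall fun pq => ?_)
  simp only [Pi.add_apply]; ring

end Aux

/-- If `χ : ℝ^d → ℂ` is measurable and rapidly decaying (`|χ(x)| ≤ C n * ‖x‖^{-n}` for all
`x ≠ 0` and every `n`), and `d ≥ 2`, then the kernel
`K(p,q) = ((‖p‖^{1/2} − ‖q‖^{1/2})/‖q‖^{1/2}) · χ(p − q) · 1_{‖q‖ ≤ 1}(q)`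
is square integrable on `ℝ^d × ℝ^d`, i.e. the associated integral operator is
Hilbert–Schmidt on `L²(ℝ^d)`. -/
theorem kernel_hilbert_schmidt {d : ℕ} (hd : 2 ≤ d)
    (χ : EuclideanSpace ℝ (Fin d) → ℂ) (hmeas : Measurable χ)
    (hdecay : ∀ n : ℕ, ∃ C : ℝ, ∀ x : EuclideanSpace ℝ (Fin d), x ≠ 0 →
      ‖χ x‖ ≤ C * ‖x‖ ^ (-(n : ℝ))) :
    MemLp
      (fun pq : EuclideanSpace ℝ (Fin d) × EuclideanSpace ℝ (Fin d) =>
        (((Real.sqrt ‖pq.1‖ - Real.sqrt ‖pq.2‖) / Real.sqrt ‖pq.2‖ : ℝ) : ℂ) *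
          χ (pq.1 - pq.2) *
          (if ‖pq.2‖ ≤ 1 then (1 : ℂ) else 0))
      2 (volume : Measure (EuclideanSpace ℝ (Fin d) × EuclideanSpace ℝ (Fin d))) := by
  classical
  set f : EuclideanSpace ℝ (Fin d) × EuclideanSpace ℝ (Fin d) → ℂ := fun pq =>
    (((Real.sqrt ‖pq.1‖ - Real.sqrt ‖pq.2‖) / Real.sqrt ‖pq.2‖ : ℝ) : ℂ) *
      χ (pq.1 - pq.2) * (if ‖pq.2‖ ≤ 1 then (1 : ℂ) else 0) with hf_def
  set w : EuclideanSpace ℝ (Fin d) → ℝ := fun q => if ‖q‖ ≤ 1 then ‖q‖⁻¹ else 0 with hw_def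
  have hwnn : ∀ y, 0 ≤ w y := by
    intro y
    by_cases h : ‖y‖ ≤ 1
    · simp only [hw_def, if_pos h]
      positivity
    · simp [hw_def, if_neg h]
  obtain ⟨M, hMnn, hM1, hM2⟩ := aux_g_bounds χ hdecay
  have hg : Integrable (fun x : EuclideanSpace ℝ (Fin d) => ‖x‖ ^ 2 * ‖χ x‖ ^ 2) :=
    aux_integrable_g χ hmeas hM2
  have hw : Integrable w := aux_integrable_inv_norm hd
  have hH : Integrable (fun pq : EuclideanSpace ℝ (Fin d) × EuclideanSpace ℝ (Fin d) =>
      (‖pq.1 - pq.2‖ ^ 2 * ‖χ (pq.1 - pq.2)‖ ^ 2 + M * w pq.1) * w pq.2)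
      (volume : Measure (EuclideanSpace ℝ (Fin d) × EuclideanSpace ℝ (Fin d))) :=
    aux_integrable_H M _ w hg hw
  -- measurability of the kernel
  have hsqrt : Measurable Real.sqrt := Real.continuous_sqrt.measurable
  have hfm : Measurable f := by
    refine Measurable.mul (Measurable.mul ?_ ?_) ?_
    · exact Complex.measurable_ofReal.comp
        (((hsqrt.comp measurable_fst.norm).sub (hsqrt.comp measurable_snd.norm)).div
          (hsqrt.comp measurable_snd.norm))
    · exact hmeas.comp (measurable_fst.sub measurable_snd)
    · exact Measurable.ite (measurableSet_le measurable_snd.norm measurable_const)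
        measurable_const measurable_const
  rw [memLp_two_iff_integrable_sq_norm hfm.aestronglyMeasurable]
  refine hH.mono' ((hfm.norm.pow_const 2).aestronglyMeasurable) ?_
  -- the a.e. pointwise bound
  have hnull : (volume : Measure (EuclideanSpace ℝ (Fin d) × EuclideanSpace ℝ (Fin d)))
      {pq | pq.1 = 0} = 0 := by
    rw [Measure.volume_eq_prod]
    have hs : {pq : EuclideanSpace ℝ (Fin d) × EuclideanSpace ℝ (Fin d) | pq.1 = 0} =
        ({(0 : EuclideanSpace ℝ (Fin d))} ×ˢ (univ : Set (EuclideanSpace ℝ (Fin d)))) := by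
      ext pq
      simp only [mem_setOf_eq, Set.mem_prod, Set.mem_singleton_iff, Set.mem_univ, and_true]
    have h0 : (volume : Measure (EuclideanSpace ℝ (Fin d))) {0} = 0 := by
      refine le_antisymm ?_ zero_le
      refine le_trans (measure_mono (show {(0 : EuclideanSpace ℝ (Fin d))} ⊆ closedBall 0 0 by
        simp)) ?_
      rw [Measure.addHaar_closedBall _ _ le_rfl, finrank_euclideanSpace_fin,
        zero_pow (by omega : d ≠ 0), ENNReal.ofReal_zero, zero_mul]
    rw [hs, Measure.prod_prod, h0, zero_mul]
  have hae : ∀ᵐ pq : EuclideanSpace ℝ (Fin d) × EuclideanSpace ℝ (Fin d) ∂volume,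
      pq.1 ≠ 0 := by
    rw [ae_iff]
    simpa using hnull
  filter_upwards [hae] with pq hp
  rw [Real.norm_of_nonneg (by positivity)]
  by_cases hq1 : ‖pq.2‖ ≤ 1
  · by_cases hq0 : pq.2 = 0
    · have hf0 : f pq = 0 := by
        simp [hf_def, hq0, Real.sqrt_zero]
      rw [hf0]
      simp only [norm_zero]
      rw [show (0:ℝ) ^ 2 = 0 by norm_num]
      exact mul_nonneg (add_nonneg (by positivity) (mul_nonneg hMnn (hwnn _))) (hwnn _)
    · have hp0 : (0:ℝ) < ‖pq.1‖ := norm_pos_iff.2 hp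
      have hq0' : (0:ℝ) < ‖pq.2‖ := norm_pos_iff.2 hq0
      have hfval : ‖f pq‖ ^ 2 =
          ((Real.sqrt ‖pq.1‖ - Real.sqrt ‖pq.2‖) / Real.sqrt ‖pq.2‖) ^ 2 *
            ‖χ (pq.1 - pq.2)‖ ^ 2 := by
        rw [hf_def]
        simp only [if_pos hq1, mul_one, norm_mul, Complex.norm_real]
        rw [mul_pow, Real.norm_eq_abs, sq_abs]
      have key := aux_sqrt_ineq hp0 hq0' (abs_norm_sub_norm_le pq.1 pq.2)
      set G : ℝ := ‖pq.1 - pq.2‖ ^ 2 * ‖χ (pq.1 - pq.2)‖ ^ 2 with hG_def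
      have hGnn : 0 ≤ G := by positivity
      have hstep : G * ‖pq.1‖⁻¹ ≤ G + M * w pq.1 := by
        by_cases hp1 : ‖pq.1‖ ≤ 1
        · have hwp : w pq.1 = ‖pq.1‖⁻¹ := if_pos hp1
          rw [hwp]
          have hGM : G ≤ M := hM1 (pq.1 - pq.2)
          calc G * ‖pq.1‖⁻¹ ≤ M * ‖pq.1‖⁻¹ := by gcongr
            _ ≤ G + M * ‖pq.1‖⁻¹ := le_add_of_nonneg_left hGnn
        · push_neg at hp1
          have hinv : ‖pq.1‖⁻¹ ≤ 1 := by
            rw [inv_le_one_iff₀]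
            right; exact hp1.le
          calc G * ‖pq.1‖⁻¹ ≤ G * 1 := by gcongr
            _ = G := mul_one _
            _ ≤ G + M * w pq.1 := le_add_of_nonneg_right (mul_nonneg hMnn (hwnn _))
      have hwq : w pq.2 = ‖pq.2‖⁻¹ := if_pos hq1
      calc ‖f pq‖ ^ 2
          = ((Real.sqrt ‖pq.1‖ - Real.sqrt ‖pq.2‖) / Real.sqrt ‖pq.2‖) ^ 2 *
            ‖χ (pq.1 - pq.2)‖ ^ 2 := hfval
        _ ≤ (‖pq.1 - pq.2‖ ^ 2 / (‖pq.1‖ * ‖pq.2‖)) * ‖χ (pq.1 - pq.2)‖ ^ 2 := by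
            gcongr
        _ = (G * ‖pq.1‖⁻¹) * ‖pq.2‖⁻¹ := by
            rw [hG_def]; field_simp
        _ ≤ (G + M * w pq.1) * ‖pq.2‖⁻¹ := by gcongr
        _ = (G + M * w pq.1) * w pq.2 := by rw [hwq]
  · have hf0 : f pq = 0 := by
      rw [hf_def]
      simp [if_neg hq1]
    rw [hf0]
    simp only [norm_zero]
    rw [show (0:ℝ) ^ 2 = 0 by norm_num]
    have hwq : w pq.2 = 0 := if_neg hq1
    rw [hwq, mul_zero]
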